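/- Let (a_j)_{j ≥ 0} be a sequence of complex numbers with |a_j| < 1 for all j and ∑_{j ≥ 0} (1 − |a_j|²) = +∞. Define B_n(z) = ∏_{0 ≤ j < n} (z − a_j)/(1 − conj(a_j)·z) and φ_n(z) = B_n(z) · √(1−|a_n|²)/(1 − conj(a_n)·z). If f is a square-integrable function on the unit circle all of whose Fourier coefficients of negative order vanish, and if ∫_{0}^{2π} f(e^{iθ}) · conj(φ_n(e^{iθ})) dθ = 0 for all n ≥ 0, then f = 0 almost everywhere. (The Malmquist–Takenaka system is an orthonormal basis of H² of the torus.) -/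

import Mathlib

/-!
Write `f̂(k) = ∫ f e^{-ikθ}` and `F(w) = ∫ f(θ) / (1 - w e^{-iθ}) dθ = ∑_{k ≥ 0} f̂(k) wᵏ` for the
Cauchy transform of `f ∈ H²` on the disk. Orthogonality of `f` to `φₙ` says exactly that the
Cauchy transform of `hₙ = f · conj Bₙ = f / Bₙ` vanishes at `aₙ`, which is what keeps
`hₙ₊₁ = hₙ / bₙ` in `H²`. Hence `F = Bₙ · Hₙ` on the disk, `Hₙ` the Cauchy transform of `hₙ`,
with `|Hₙ(w)| ≤ ‖f‖₁ / (1 - |w|)`. Since `|b_a(w)| ≤ exp(-(1 - |a|²)(1 - |w|²)/8)`, the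
divergence of `∑ (1 - |aⱼ|²)` forces `Bₙ(w) → 0`, so `F ≡ 0`, all Fourier coefficients of `f`
vanish, and `f = 0` by Parseval.
-/

open Complex Real MeasureTheory ComplexConjugate Filter

namespace MalmquistTakenaka

noncomputable section

local notation "μT" => volume.restrict (Set.Ioc (0 : ℝ) (2 * π))

/-- `fourierMode (-1) θ = e^{iθ}` is the point of the circle, `fourierMode 1 θ` its conjugate. -/
def fourierMode (m : ℤ) (θ : ℝ) : ℂ := Complex.exp (-(m : ℂ) * θ * I)

lemma norm_fourierMode (m : ℤ) (θ : ℝ) : ‖fourierMode m θ‖ = 1 := by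
  rw [fourierMode, norm_exp]; simp

lemma fourierMode_mul_fourierMode (m k : ℤ) (θ : ℝ) :
    fourierMode m θ * fourierMode k θ = fourierMode (m + k) θ := by
  simp only [fourierMode, ← Complex.exp_add]; push_cast; ring_nf

lemma fourierMode_pow (s : ℤ) (k : ℕ) (θ : ℝ) : fourierMode s θ ^ k = fourierMode (s * k) θ := by
  simp only [fourierMode, ← Complex.exp_nat_mul]; push_cast; ring_nf

lemma fourierMode_zero (θ : ℝ) : fourierMode 0 θ = 1 := by simp [fourierMode]

lemma fourierMode_neg_one (θ : ℝ) : fourierMode (-1) θ = Complex.exp (θ * I) := by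
  simp [fourierMode]

lemma conj_fourierMode (m : ℤ) (θ : ℝ) : conj (fourierMode m θ) = fourierMode (-m) θ := by
  simp [fourierMode, ← Complex.exp_conj]

@[fun_prop]
lemma continuous_fourierMode (m : ℤ) : Continuous (fourierMode m) := by
  unfold fourierMode; fun_prop

lemma norm_one_sub_mul_fourierMode_ge (c : ℂ) (s : ℤ) (θ : ℝ) :
    1 - ‖c‖ ≤ ‖1 - c * fourierMode s θ‖ := by
  simpa [norm_fourierMode] using norm_sub_norm_le (1 : ℂ) (c * fourierMode s θ)

lemma one_sub_mul_fourierMode_ne_zero {c : ℂ} (hc : ‖c‖ < 1) (s : ℤ) (θ : ℝ) :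
    1 - c * fourierMode s θ ≠ 0 :=
  norm_pos_iff.mp ((sub_pos.mpr hc).trans_le (norm_one_sub_mul_fourierMode_ge c s θ))

lemma continuous_inv_one_sub_mul_fourierMode {c : ℂ} (hc : ‖c‖ < 1) (s : ℤ) :
    Continuous fun θ => (1 - c * fourierMode s θ)⁻¹ :=
  (by fun_prop : Continuous fun θ => 1 - c * fourierMode s θ).inv₀
    (one_sub_mul_fourierMode_ne_zero hc s)

lemma integrable_mul_continuous {a b : ℝ} {u g : ℝ → ℂ}
    (hu : Integrable u (volume.restrict (Set.Ioc a b))) (hg : Continuous g) :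
    Integrable (fun θ => u θ * g θ) (volume.restrict (Set.Ioc a b)) :=
  IntegrableOn.mul_continuousOn_of_subset hu hg.continuousOn measurableSet_Ioc isCompact_Icc
    Set.Ioc_subset_Icc_self

def coeff (u : ℝ → ℂ) (m : ℤ) : ℂ := ∫ θ in Set.Ioc 0 (2 * π), u θ * fourierMode m θ

lemma norm_coeff_le (u : ℝ → ℂ) (m : ℤ) : ‖coeff u m‖ ≤ ∫ θ in Set.Ioc 0 (2 * π), ‖u θ‖ :=
  (norm_integral_le_integral_norm _).trans_eq <| by simp [norm_fourierMode]

lemma coeff_zero (u : ℝ → ℂ) : coeff u 0 = ∫ θ in Set.Ioc 0 (2 * π), u θ := by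
  simp [coeff, fourierMode_zero]

lemma coeff_mul_fourierMode (u : ℝ → ℂ) (s m : ℤ) :
    coeff (fun θ => u θ * fourierMode s θ) m = coeff u (m + s) := by
  simp only [coeff, mul_assoc, fourierMode_mul_fourierMode, add_comm s]

lemma coeff_sub_const_mul {u v : ℝ → ℂ} (hu : Integrable u μT) (hv : Integrable v μT) (c : ℂ)
    (m : ℤ) : coeff (fun θ => u θ - c * v θ) m = coeff u m - c * coeff v m := by
  simp only [coeff, sub_mul, mul_assoc]
  rw [integral_sub (integrable_mul_continuous hu (continuous_fourierMode m))
    ((integrable_mul_continuous hv (continuous_fourierMode m)).const_mul c), integral_const_mul]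

lemma coeff_mul_inv_one_sub {u : ℝ → ℂ} (hu : Integrable u μT) {c : ℂ} (hc : ‖c‖ < 1) (s m : ℤ) :
    coeff (fun θ => u θ * (1 - c * fourierMode s θ)⁻¹) m
      = ∑' k : ℕ, c ^ k * coeff u (m + s * k) := by
  have hterm : ∀ k : ℕ, Integrable (fun θ => c ^ k * (u θ * fourierMode (m + s * k) θ)) μT :=
    fun k => (integrable_mul_continuous hu (continuous_fourierMode _)).const_mul _
  have hsum : Summable fun k : ℕ =>
      ∫ θ in Set.Ioc 0 (2 * π), ‖c ^ k * (u θ * fourierMode (m + s * k) θ)‖ := by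
    simp only [norm_mul, norm_pow, norm_fourierMode, mul_one, integral_const_mul]
    exact (summable_geometric_of_lt_one (norm_nonneg c) hc).mul_right _
  simp only [coeff, ← integral_const_mul]
  rw [integral_tsum_of_summable_integral_norm hterm hsum]
  refine integral_congr_ae (ae_of_all _ fun θ => ?_)
  have hcθ : ‖c * fourierMode s θ‖ < 1 := by rwa [norm_mul, norm_fourierMode, mul_one]
  dsimp only
  rw [← tsum_geometric_of_norm_lt_one hcθ, mul_assoc, ← tsum_mul_right, ← tsum_mul_left]
  refine tsum_congr fun k => ?_
  rw [mul_pow, fourierMode_pow, add_comm m, ← fourierMode_mul_fourierMode]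
  ring

def cauchy (u : ℝ → ℂ) (w : ℂ) : ℂ :=
  ∫ θ in Set.Ioc 0 (2 * π), u θ * (1 - w * fourierMode 1 θ)⁻¹

lemma cauchy_eq_tsum {u : ℝ → ℂ} (hu : Integrable u μT) {w : ℂ} (hw : ‖w‖ < 1) :
    cauchy u w = ∑' k : ℕ, coeff u k * w ^ k := by
  rw [cauchy, ← coeff_zero, coeff_mul_inv_one_sub hu hw]
  simp [mul_comm]

lemma norm_cauchy_le {u : ℝ → ℂ} (hu : Integrable u μT) {w : ℂ} (hw : ‖w‖ < 1) :
    ‖cauchy u w‖ ≤ (∫ θ in Set.Ioc 0 (2 * π), ‖u θ‖) * (1 - ‖w‖)⁻¹ := by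
  rw [← integral_mul_const]
  refine norm_integral_le_of_norm_le (hu.norm.mul_const _) (ae_of_all _ fun θ => ?_)
  rw [norm_mul, norm_inv]
  exact mul_le_mul_of_nonneg_left
    (inv_anti₀ (by linarith) (norm_one_sub_mul_fourierMode_ge w 1 θ)) (norm_nonneg _)

def IsHardy (u : ℝ → ℂ) : Prop := ∀ m < (0 : ℤ), coeff u m = 0

lemma tsum_eq_tsum_nat_add_of_eq_zero {G : Type*} [AddCommGroup G] [TopologicalSpace G]
    [IsTopologicalAddGroup G] [T2Space G] {f : ℕ → G} (p : ℕ) (hf : ∀ k < p, f k = 0) :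
    ∑' k, f k = ∑' k, f (k + p) := by
  by_cases hs : Summable f
  · rw [← hs.sum_add_tsum_nat_add p, Finset.sum_eq_zero fun k hk => hf k (Finset.mem_range.mp hk),
      zero_add]
  · rw [tsum_eq_zero_of_not_summable hs,
      tsum_eq_zero_of_not_summable ((summable_nat_add_iff p).not.mpr hs)]

lemma IsHardy.coeff_neg_mul_inv_one_sub {u : ℝ → ℂ} (hu : Integrable u μT) (hH : IsHardy u) {c : ℂ}
    (hc : ‖c‖ < 1) (p : ℕ) :
    coeff (fun θ => u θ * (1 - c * fourierMode 1 θ)⁻¹) (-p) = c ^ p * cauchy u c := by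
  rw [coeff_mul_inv_one_sub hu hc, cauchy_eq_tsum hu hc, ← tsum_mul_left,
    tsum_eq_tsum_nat_add_of_eq_zero p fun k hk => by rw [hH _ (by omega), mul_zero]]
  refine tsum_congr fun k => ?_
  push_cast
  rw [show -(p : ℤ) + 1 * (k + p) = k by ring, pow_add]
  ring

lemma eq_zero_of_tsum_mul_pow_eq_zero {d : ℕ → ℂ} {C : ℝ} (hd : ∀ k, ‖d k‖ ≤ C)
    (h : ∀ w : ℂ, ‖w‖ < 1 → ∑' k, d k * w ^ k = 0) : d = 0 := by
  set p := FormalMultilinearSeries.ofScalars ℂ d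
  have hrad : 1 ≤ p.radius := by
    refine p.le_radius_of_bound C fun n => ?_
    simpa [p, FormalMultilinearSeries.ofScalars_norm] using hd n
  have hp := (p.hasFPowerSeriesOnBall (zero_lt_one.trans_le hrad)).hasFPowerSeriesAt
  refine (FormalMultilinearSeries.ofScalars_series_eq_zero ℂ).mp (hp.eq_zero_of_eventually ?_)
  filter_upwards [Metric.ball_mem_nhds (0 : ℂ) zero_lt_one] with w hw
  rw [mem_ball_zero_iff] at hw
  have := FormalMultilinearSeries.ofScalars_sum_eq (E := ℂ) d w
  simp only [FormalMultilinearSeries.ofScalarsSum, smul_eq_mul] at this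
  simpa [p, this] using h w hw

lemma coeff_eq_zero_of_cauchy_eq_zero {f : ℝ → ℂ} (hf : Integrable f μT) (hfH : IsHardy f)
    (hF : ∀ w : ℂ, ‖w‖ < 1 → cauchy f w = 0) (m : ℤ) : coeff f m = 0 := by
  obtain hm | ⟨k, rfl⟩ := (lt_or_ge m 0).imp_right Int.eq_ofNat_of_zero_le
  · exact hfH m hm
  refine congrFun (eq_zero_of_tsum_mul_pow_eq_zero (fun k => norm_coeff_le f k) fun w hw => ?_) k
  rw [← cauchy_eq_tsum hf hw, hF w hw]

lemma ae_eq_zero_of_coeff_eq_zero {f : ℝ → ℂ} (hf : MemLp f 2 μT) (h : ∀ m, coeff f m = 0) :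
    ∀ᵐ θ ∂μT, f θ = 0 := by
  have hcoeff : ∀ m, fourierCoeffOn two_pi_pos f m = 0 := by
    intro m
    have hmode : ∀ θ : ℝ, fourier (-m) (θ : AddCircle (2 * π - 0)) = fourierMode m θ := by
      intro θ
      rw [fourier_coe_apply, fourierMode, sub_zero]
      congr 1
      push_cast
      field_simp
    rw [fourierCoeffOn_eq_integral, intervalIntegral.integral_of_le two_pi_pos.le]
    simp only [hmode, smul_eq_mul, mul_comm _ (f _)]
    rw [← coeff, h m, smul_zero]
  have hint : ∫ θ in Set.Ioc 0 (2 * π), ‖f θ‖ ^ 2 = 0 := by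
    have hsum := hasSum_sq_fourierCoeffOn two_pi_pos hf
    simp only [hcoeff, norm_zero, zero_pow two_ne_zero] at hsum
    rw [← intervalIntegral.integral_of_le two_pi_pos.le]
    exact (smul_eq_zero_iff_right (by simp [pi_ne_zero])).mp (hsum.unique hasSum_zero)
  rw [integral_eq_zero_iff_of_nonneg (fun θ => by positivity) (hf.integrable_norm_pow two_ne_zero)]
    at hint
  filter_upwards [hint] with θ hθ
  simp_all

lemma ae_eq_zero_of_periodic {T : ℝ} (hT : 0 < T) {f : ℝ → ℂ} (hper : Function.Periodic f T)
    (h : ∀ᵐ θ ∂volume.restrict (Set.Ioc 0 T), f θ = 0) : ∀ᵐ θ, f θ = 0 := by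
  rw [ae_restrict_iff' measurableSet_Ioc, ae_iff] at h
  rw [ae_iff]
  refine measure_mono_null (fun x hx => ?_)
    (measure_iUnion_null fun n : ℤ => (measure_preimage_add_right volume (n • T) _).trans h)
  obtain ⟨n, hn, -⟩ := existsUnique_add_zsmul_mem_Ioc hT x 0
  refine Set.mem_iUnion.mpr ⟨n, ?_⟩
  exact fun h' => hx ((hper.zsmul n x).symm.trans (h' (by simpa using hn)))

def blaschkeFactor (a z : ℂ) : ℂ := (z - a) / (1 - conj a * z)

def blaschkeProduct (a : ℕ → ℂ) (n : ℕ) (z : ℂ) : ℂ :=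
  ∏ j ∈ Finset.range n, blaschkeFactor (a j) z

lemma one_sub_conj_mul_ne_zero {a z : ℂ} (ha : ‖a‖ < 1) (hz : ‖z‖ ≤ 1) : 1 - conj a * z ≠ 0 := by
  refine sub_ne_zero.mpr fun h => ?_
  have : ‖conj a * z‖ < 1 := by
    rw [norm_mul, RCLike.norm_conj]
    nlinarith [norm_nonneg a, norm_nonneg z]
  simp [← h] at this

lemma normSq_one_sub_conj_mul_sub_normSq_sub (a z : ℂ) :
    normSq (1 - conj a * z) - normSq (z - a) = (1 - normSq a) * (1 - normSq z) := by
  simp only [normSq_apply, sub_re, sub_im, mul_re, mul_im, conj_re, conj_im, one_re, one_im]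
  ring

lemma norm_blaschkeFactor_sq {a z : ℂ} (ha : ‖a‖ < 1) (hz : ‖z‖ ≤ 1) :
    ‖blaschkeFactor a z‖ ^ 2
      = 1 - (1 - ‖a‖ ^ 2) * (1 - ‖z‖ ^ 2) / ‖1 - conj a * z‖ ^ 2 := by
  have hden : ‖1 - conj a * z‖ ^ 2 ≠ 0 := by simpa using one_sub_conj_mul_ne_zero ha hz
  have := normSq_one_sub_conj_mul_sub_normSq_sub a z
  simp only [normSq_eq_norm_sq] at this
  rw [blaschkeFactor, norm_div, div_pow, eq_sub_iff_add_eq, ← add_div, div_eq_one_iff_eq hden]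
  linarith

lemma norm_blaschkeFactor_of_norm_eq_one {a z : ℂ} (ha : ‖a‖ < 1) (hz : ‖z‖ = 1) :
    ‖blaschkeFactor a z‖ = 1 := by
  have := norm_blaschkeFactor_sq ha hz.le
  rw [hz, one_pow, sub_self, mul_zero, zero_div, sub_zero] at this
  exact (pow_eq_one_iff_of_nonneg (norm_nonneg _) two_ne_zero).mp this

lemma norm_blaschkeFactor_le_exp {a z : ℂ} (ha : ‖a‖ < 1) (hz : ‖z‖ < 1) :
    ‖blaschkeFactor a z‖ ≤ Real.exp (-((1 - ‖a‖ ^ 2) * (1 - ‖z‖ ^ 2) / 8)) := by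
  set P := (1 - ‖a‖ ^ 2) * (1 - ‖z‖ ^ 2)
  have hP : 0 < P := by
    apply mul_pos <;> nlinarith [norm_nonneg a, norm_nonneg z]
  have hP1 : P ≤ 1 := by
    apply mul_le_one₀ <;> nlinarith [norm_nonneg a, norm_nonneg z]
  have hden : ‖1 - conj a * z‖ ≤ 2 := by
    refine (norm_sub_le _ _).trans ?_
    rw [norm_one, norm_mul, RCLike.norm_conj]
    nlinarith [norm_nonneg a, norm_nonneg z]
  have hden0 : 0 < ‖1 - conj a * z‖ := norm_pos_iff.mpr (one_sub_conj_mul_ne_zero ha hz.le)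
  have hsq : ‖blaschkeFactor a z‖ ^ 2 ≤ 1 - P / 4 := by
    rw [norm_blaschkeFactor_sq ha hz.le]
    have : P / 4 ≤ P / ‖1 - conj a * z‖ ^ 2 :=
      div_le_div_of_nonneg_left hP.le (by positivity) (by nlinarith)
    linarith
  have hle : ‖blaschkeFactor a z‖ ≤ 1 - P / 8 := by
    nlinarith [norm_nonneg (blaschkeFactor a z)]
  linarith [Real.add_one_le_exp (-(P / 8))]

lemma norm_blaschkeProduct_le_exp {a : ℕ → ℂ} (ha : ∀ j, ‖a j‖ < 1) {z : ℂ} (hz : ‖z‖ < 1)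
    (n : ℕ) :
    ‖blaschkeProduct a n z‖
      ≤ Real.exp (-((1 - ‖z‖ ^ 2) / 8 * ∑ j ∈ Finset.range n, (1 - ‖a j‖ ^ 2))) := by
  rw [blaschkeProduct, norm_prod, Finset.mul_sum, ← Finset.sum_neg_distrib, Real.exp_sum]
  refine Finset.prod_le_prod (fun j _ => norm_nonneg _) fun j _ => ?_
  exact (norm_blaschkeFactor_le_exp (ha j) hz).trans_eq (by ring_nf)

lemma tendsto_blaschkeProduct_atTop {a : ℕ → ℂ} (ha : ∀ j, ‖a j‖ < 1)
    (hdiv : Tendsto (fun N => ∑ j ∈ Finset.range N, (1 - ‖a j‖ ^ 2)) atTop atTop) {z : ℂ}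
    (hz : ‖z‖ < 1) : Tendsto (fun n => blaschkeProduct a n z) atTop (nhds 0) := by
  have hc : 0 < (1 - ‖z‖ ^ 2) / 8 := by nlinarith [norm_nonneg z]
  refine squeeze_zero_norm (norm_blaschkeProduct_le_exp ha hz) ?_
  exact Real.tendsto_exp_atBot.comp (tendsto_neg_atTop_atBot.comp (hdiv.const_mul_atTop hc))

lemma fourierMode_one_mul_fourierMode_neg_one (θ : ℝ) :
    fourierMode 1 θ * fourierMode (-1) θ = 1 := by
  rw [fourierMode_mul_fourierMode, add_neg_cancel, fourierMode_zero]

lemma conj_blaschkeFactor_fourierMode (a : ℂ) (θ : ℝ) :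
    conj (blaschkeFactor a (fourierMode (-1) θ))
      = (fourierMode 1 θ - conj a) * (1 - a * fourierMode 1 θ)⁻¹ := by
  simp [blaschkeFactor, conj_fourierMode, div_eq_mul_inv]

lemma blaschkeFactor_fourierMode_mul_conj {a : ℂ} (ha : ‖a‖ < 1) (θ : ℝ) :
    blaschkeFactor a (fourierMode (-1) θ) * conj (blaschkeFactor a (fourierMode (-1) θ)) = 1 := by
  rw [mul_conj, normSq_eq_norm_sq,
    norm_blaschkeFactor_of_norm_eq_one ha (norm_fourierMode (-1) θ)]
  simp

/-- On the circle `conj b_a = (ζ̄ - ā) / (1 - a ζ̄)`, and the coefficient of order `-p` of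
`u / (1 - a ζ̄)` is `aᵖ · cauchy u a`. -/
lemma IsHardy.mul_conj_blaschkeFactor {u : ℝ → ℂ} (hu : Integrable u μT) (hH : IsHardy u)
    {a : ℂ} (ha : ‖a‖ < 1) (h0 : cauchy u a = 0) :
    IsHardy fun θ => u θ * conj (blaschkeFactor a (fourierMode (-1) θ)) := by
  intro m hm
  obtain ⟨p, rfl⟩ : ∃ p : ℕ, m = -((p + 1 : ℕ) : ℤ) := ⟨(-m - 1).toNat, by omega⟩
  set T := fun θ => u θ * (1 - a * fourierMode 1 θ)⁻¹
  have hT : Integrable T μT :=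
    integrable_mul_continuous hu (continuous_inv_one_sub_mul_fourierMode ha 1)
  have hpt : (fun θ => u θ * conj (blaschkeFactor a (fourierMode (-1) θ)))
      = fun θ => T θ * fourierMode 1 θ - conj a * T θ := by
    ext θ
    rw [conj_blaschkeFactor_fourierMode]
    ring
  rw [hpt, coeff_sub_const_mul (integrable_mul_continuous hT (continuous_fourierMode 1)) hT,
    coeff_mul_fourierMode, show -((p + 1 : ℕ) : ℤ) + 1 = -(p : ℤ) by push_cast; ring,
    hH.coeff_neg_mul_inv_one_sub hu ha, hH.coeff_neg_mul_inv_one_sub hu ha, h0]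
  simp

lemma blaschkeFactor_div_one_sub_mul {a w ζ ζ' : ℂ} (hζ : ζ' * ζ = 1) (hw : 1 - w * ζ' ≠ 0)
    (haζ : 1 - conj a * ζ ≠ 0) (haw : 1 - conj a * w ≠ 0) :
    blaschkeFactor a ζ / (1 - w * ζ') = blaschkeFactor a w / (1 - w * ζ')
      + (1 - conj a * a) / (1 - conj a * w) * (ζ / (1 - conj a * ζ)) := by
  rw [blaschkeFactor, blaschkeFactor, div_div, div_div, div_mul_div_comm,
    div_add_div _ _ (mul_ne_zero haw hw) (mul_ne_zero haw haζ),
    div_eq_div_iff (mul_ne_zero haζ hw) (mul_ne_zero (mul_ne_zero haw hw) (mul_ne_zero haw haζ))]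
  linear_combination (1 - conj a * w) * (1 - conj a * ζ) * (1 - w * ζ') * (1 - conj a * a) * w * hζ

/-- The kernel of `(b_a(ζ) - b_a(w)) / (1 - w ζ̄)` is `ζ / (1 - ā ζ)` up to a constant; it has only
positive frequencies, which are invisible to `u ∈ H²`. -/
lemma IsHardy.cauchy_mul_blaschkeFactor {u : ℝ → ℂ} (hu : Integrable u μT) (hH : IsHardy u)
    {a w : ℂ} (ha : ‖a‖ < 1) (hw : ‖w‖ < 1) :
    cauchy (fun θ => u θ * blaschkeFactor a (fourierMode (-1) θ)) w
      = blaschkeFactor a w * cauchy u w := by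
  have hca : ‖conj a‖ < 1 := by rwa [RCLike.norm_conj]
  have hpt : ∀ θ, u θ * blaschkeFactor a (fourierMode (-1) θ) * (1 - w * fourierMode 1 θ)⁻¹
      = blaschkeFactor a w * (u θ * (1 - w * fourierMode 1 θ)⁻¹)
        + (1 - conj a * a) / (1 - conj a * w)
          * (u θ * (1 - conj a * fourierMode (-1) θ)⁻¹ * fourierMode (-1) θ) := by
    intro θ
    have := blaschkeFactor_div_one_sub_mul (fourierMode_one_mul_fourierMode_neg_one θ)
      (one_sub_mul_fourierMode_ne_zero hw 1 θ) (one_sub_mul_fourierMode_ne_zero hca (-1) θ)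
      (one_sub_conj_mul_ne_zero ha hw.le)
    simp only [div_eq_mul_inv] at this
    linear_combination u θ * this
  have hpos : coeff (fun θ => u θ * (1 - conj a * fourierMode (-1) θ)⁻¹) (-1) = 0 := by
    rw [coeff_mul_inv_one_sub hu hca]
    refine (tsum_congr fun k => ?_).trans tsum_zero
    rw [hH _ (by omega), mul_zero]
  have hint₁ := integrable_mul_continuous hu (continuous_inv_one_sub_mul_fourierMode hw 1)
  have hint₂ := integrable_mul_continuous
    (integrable_mul_continuous hu (continuous_inv_one_sub_mul_fourierMode hca (-1)))
    (continuous_fourierMode (-1))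
  simp only [cauchy]
  rw [integral_congr_ae (ae_of_all _ hpt), integral_add (hint₁.const_mul _) (hint₂.const_mul _),
    integral_const_mul, integral_const_mul, ← coeff, hpos, mul_zero, add_zero]

/-- On the circle `conj Bₙ = Bₙ⁻¹`, so this is `f / Bₙ`. -/
def blaschkeQuotient (a : ℕ → ℂ) (f : ℝ → ℂ) (n : ℕ) (θ : ℝ) : ℂ :=
  f θ * conj (blaschkeProduct a n (fourierMode (-1) θ))

section blaschkeQuotient

variable {a : ℕ → ℂ} {f : ℝ → ℂ}

lemma blaschkeQuotient_zero : blaschkeQuotient a f 0 = f := by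
  ext θ; simp [blaschkeQuotient, blaschkeProduct]

lemma blaschkeQuotient_succ (n : ℕ) :
    blaschkeQuotient a f (n + 1)
      = fun θ => blaschkeQuotient a f n θ * conj (blaschkeFactor (a n) (fourierMode (-1) θ)) := by
  ext θ; simp [blaschkeQuotient, blaschkeProduct, Finset.prod_range_succ, mul_assoc]

lemma blaschkeQuotient_eq_succ_mul (ha : ∀ j, ‖a j‖ < 1) (n : ℕ) :
    blaschkeQuotient a f n
      = fun θ => blaschkeQuotient a f (n + 1) θ * blaschkeFactor (a n) (fourierMode (-1) θ) := by
  ext θ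
  rw [blaschkeQuotient_succ, mul_assoc, mul_comm (conj _), blaschkeFactor_fourierMode_mul_conj (ha n),
    mul_one]

lemma norm_blaschkeQuotient (ha : ∀ j, ‖a j‖ < 1) (n : ℕ) (θ : ℝ) :
    ‖blaschkeQuotient a f n θ‖ = ‖f θ‖ := by
  simp [blaschkeQuotient, blaschkeProduct, norm_prod,
    norm_blaschkeFactor_of_norm_eq_one (ha _) (norm_fourierMode (-1) θ)]

lemma integrable_blaschkeQuotient (ha : ∀ j, ‖a j‖ < 1) (hf : Integrable f μT) (n : ℕ) :
    Integrable (blaschkeQuotient a f n) μT := by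
  refine integrable_mul_continuous hf (continuous_conj.comp (continuous_finsetProd _ fun j _ => ?_))
  exact (by fun_prop : Continuous fun θ => fourierMode (-1) θ - a j).div (by fun_prop)
    fun θ => one_sub_conj_mul_ne_zero (ha j) (norm_fourierMode (-1) θ).le

lemma isHardy_blaschkeQuotient (ha : ∀ j, ‖a j‖ < 1) (hf : Integrable f μT) (hfH : IsHardy f)
    (h0 : ∀ n, cauchy (blaschkeQuotient a f n) (a n) = 0) (n : ℕ) :
    IsHardy (blaschkeQuotient a f n) := by
  induction n with
  | zero => rwa [blaschkeQuotient_zero]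
  | succ n ih =>
    rw [blaschkeQuotient_succ]
    exact ih.mul_conj_blaschkeFactor (integrable_blaschkeQuotient ha hf n) (ha n) (h0 n)

lemma cauchy_eq_blaschkeProduct_mul (ha : ∀ j, ‖a j‖ < 1) (hf : Integrable f μT)
    (hH : ∀ n, IsHardy (blaschkeQuotient a f n)) {w : ℂ} (hw : ‖w‖ < 1) (n : ℕ) :
    cauchy f w = blaschkeProduct a n w * cauchy (blaschkeQuotient a f n) w := by
  induction n with
  | zero => simp [blaschkeProduct, blaschkeQuotient_zero]
  | succ n ih =>
    rw [ih, blaschkeQuotient_eq_succ_mul ha n,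
      (hH (n + 1)).cauchy_mul_blaschkeFactor (integrable_blaschkeQuotient ha hf _) (ha n) hw,
      blaschkeProduct, blaschkeProduct, Finset.prod_range_succ, mul_assoc]

lemma cauchy_eq_zero (ha : ∀ j, ‖a j‖ < 1)
    (hdiv : Tendsto (fun N => ∑ j ∈ Finset.range N, (1 - ‖a j‖ ^ 2)) atTop atTop)
    (hf : Integrable f μT) (hH : ∀ n, IsHardy (blaschkeQuotient a f n)) {w : ℂ} (hw : ‖w‖ < 1) :
    cauchy f w = 0 := by
  set C := (∫ θ in Set.Ioc 0 (2 * π), ‖f θ‖) * (1 - ‖w‖)⁻¹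
  have hbound : ∀ n, ‖cauchy f w‖ ≤ ‖blaschkeProduct a n w‖ * C := fun n => by
    rw [cauchy_eq_blaschkeProduct_mul ha hf hH hw n, norm_mul]
    gcongr
    simpa only [norm_blaschkeQuotient ha] using
      norm_cauchy_le (integrable_blaschkeQuotient ha hf n) hw
  have hlim := (tendsto_blaschkeProduct_atTop ha hdiv hw).norm.mul_const C
  rw [norm_zero, zero_mul] at hlim
  exact norm_le_zero_iff.mp (ge_of_tendsto' hlim hbound)

end blaschkeQuotient

lemma integral_mul_conj_malmquistTakenaka (a : ℕ → ℂ) (f : ℝ → ℂ) (n : ℕ) :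
    ∫ θ : ℝ in (0 : ℝ)..(2 * π), f θ * conj (blaschkeProduct a n (Complex.exp (θ * I))
      * (√(1 - ‖a n‖ ^ 2) : ℂ) / (1 - conj (a n) * Complex.exp (θ * I)))
      = √(1 - ‖a n‖ ^ 2) * cauchy (blaschkeQuotient a f n) (a n) := by
  rw [intervalIntegral.integral_of_le two_pi_pos.le, cauchy, ← integral_const_mul]
  refine integral_congr_ae (ae_of_all _ fun θ => ?_)
  simp only [← fourierMode_neg_one, blaschkeQuotient, div_eq_mul_inv, map_mul, map_inv₀, map_sub,
    map_one, conj_conj, conj_ofReal, conj_fourierMode, neg_neg]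
  ring

end

end MalmquistTakenaka

open MalmquistTakenaka

/-- The Malmquist–Takenaka system on the torus associated with a sequence `(a_j)` of points of
the open unit disk with `∑ (1 − |a_j|²) = ∞` is an orthonormal basis of `H²` of the torus:
if `f` is a (2π-periodic) square-integrable function on the circle whose Fourier coefficients
of negative order vanish and which is orthogonal to every `φ_n`, then `f = 0` a.e. -/
theorem malmquist_takenaka_torus_basis (a : ℕ → ℂ) (ha : ∀ j, ‖a j‖ < 1)
    (hdiv : Tendsto (fun N => ∑ j ∈ Finset.range N, (1 - ‖a j‖ ^ 2)) atTop atTop)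
    (B : ℕ → ℂ → ℂ)
    (hB : ∀ n z, B n z = ∏ j ∈ Finset.range n, (z - a j) / (1 - conj (a j) * z))
    (φ : ℕ → ℂ → ℂ)
    (hφ : ∀ n z, φ n z =
      B n z * (Real.sqrt (1 - ‖a n‖ ^ 2) : ℂ) / (1 - conj (a n) * z))
    (f : ℝ → ℂ) (hper : Function.Periodic f (2 * π))
    (hf2 : MemLp f 2 (volume.restrict (Set.Ioc 0 (2 * π))))
    (hneg : ∀ k : ℤ, k < 0 →
      ∫ θ : ℝ in (0 : ℝ)..(2 * π), f θ * Complex.exp (-(k : ℂ) * (θ : ℂ) * I) = 0)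
    (horth : ∀ n : ℕ,
      ∫ θ : ℝ in (0 : ℝ)..(2 * π), f θ * conj (φ n (Complex.exp ((θ : ℂ) * I))) = 0) :
    ∀ᵐ θ : ℝ, f θ = 0 := by
  obtain rfl : B = blaschkeProduct a := funext₂ hB
  obtain rfl : φ = fun n z => blaschkeProduct a n z * √(1 - ‖a n‖ ^ 2) / (1 - conj (a n) * z) :=
    funext₂ hφ
  have hf := hf2.integrable one_le_two
  have hfH : IsHardy f := fun m hm =>
    (intervalIntegral.integral_of_le two_pi_pos.le).symm.trans (hneg m hm)
  have hcauchy : ∀ n, cauchy (blaschkeQuotient a f n) (a n) = 0 := fun n => by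
    have hsqrt : (√(1 - ‖a n‖ ^ 2) : ℂ) ≠ 0 := ofReal_ne_zero.mpr <| Real.sqrt_ne_zero'.mpr <|
      sub_pos.mpr (pow_lt_one₀ (norm_nonneg _) (ha n) two_ne_zero)
    have h := horth n
    beta_reduce at h
    rw [integral_mul_conj_malmquistTakenaka, mul_eq_zero] at h
    exact h.resolve_left hsqrt
  have hH := isHardy_blaschkeQuotient ha hf hfH hcauchy
  have hcoeff := coeff_eq_zero_of_cauchy_eq_zero hf hfH fun w hw => cauchy_eq_zero ha hdiv hf hH hw
  exact ae_eq_zero_of_periodic two_pi_pos hper (ae_eq_zero_of_coeff_eq_zero hf2 hcoeff)
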